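/- There exists a constant C > 0 depending only on M, ā and T such that the following holds. On the Shishkin mesh (with ρ = min(T/2, ā⁻¹ ε ln N)), let g ∈ C²([0,T]) satisfy |g''(τ)| ≤ M(1 + ε⁻² e^{−ā τ/ε}) for all τ ∈ [0,T]. Then |½ Σ_{j=1}^{N} ∫_{ξ_{j−1}}^{ξ_j} (τ − ξ_j)(τ − ξ_{j−1}) g''(τ) dτ| ≤ C N⁻² ln N. -/

import Mathlib

/-- Shishkin transition point `ρ = min(T/2, ā⁻¹ ε ln N)`. -/
noncomputable def sRho (T abar ε : ℝ) (N : ℕ) : ℝ :=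
  min (T / 2) (abar⁻¹ * ε * Real.log N)

/-- Fine step size `h⁽¹⁾ = 2ρ/N`. -/
noncomputable def sH1 (T abar ε : ℝ) (N : ℕ) : ℝ := 2 * sRho T abar ε N / N

/-- Coarse step size `h⁽²⁾ = 2(T−ρ)/N`. -/
noncomputable def sH2 (T abar ε : ℝ) (N : ℕ) : ℝ :=
  2 * (T - sRho T abar ε N) / N

/-- Shishkin mesh points `ξ_i`. -/
noncomputable def sXi (T abar ε : ℝ) (N i : ℕ) : ℝ :=
  if i ≤ N / 2 then (i : ℝ) * sH1 T abar ε N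
  else sRho T abar ε N + ((i : ℝ) - (N : ℝ) / 2) * sH2 T abar ε N

/-!
On a cell `[a, b]` of width `h` the kernel satisfies `|(τ - b)(τ - a)| ≤ h (τ - a)`, so each cell
contributes at most `h ∫ₐᵇ (τ - a) |g''|`. The regular part `M` of the bound on `g''` gives
`M h³ / 2` per cell, hence `O(T³ N⁻²)` in total, because every step is at most `2T/N`.
For the layer part `K e^{-τ/δ}`, with `K = M ε⁻²` and `δ = ε/ā`, the integral
`∫ₐᵇ (τ - a) e^{-τ/δ}` is at most `min(h, δ) δ` times the drop of `e^{-τ/δ}` across the cell, so on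
each half of the mesh these terms telescope. On the fine half `h ≤ 2δ ln N / N`. On the coarse half
the telescoped factor is `e^{-ρ/δ}`: it equals `1/N` when `ρ = δ ln N`, and otherwise
`ρ = T/2 ≤ δ ln N` makes `h ≤ 2δ ln N / N`. Either way the layer part is
`O(K δ² T ln N / N²) = O(ā⁻² T ln N / N²)`, uniformly in `ε`.
-/

open Real Set Finset

theorem hasDerivAt_exp_neg_div (δ τ : ℝ) :
    HasDerivAt (fun τ => exp (-(τ / δ))) (-(exp (-(τ / δ)) / δ)) τ := by
  convert ((hasDerivAt_id' τ).div_const δ).fun_neg.exp using 1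
  ring

theorem integral_exp_neg_div (a b δ : ℝ) (hδ : δ ≠ 0) :
    ∫ τ in a..b, exp (-(τ / δ)) = δ * (exp (-(a / δ)) - exp (-(b / δ))) := by
  have hF : ∀ τ ∈ uIcc a b, HasDerivAt (fun τ => -δ * exp (-(τ / δ))) (exp (-(τ / δ))) τ :=
    fun τ _ => ((hasDerivAt_exp_neg_div δ τ).const_mul (-δ)).congr_deriv (by field_simp)
  rw [intervalIntegral.integral_eq_sub_of_hasDerivAt hF
    (by apply Continuous.intervalIntegrable; fun_prop)]
  ring

theorem integral_sub_mul_exp_neg_div_le {a b δ : ℝ} (hab : a ≤ b) (hδ : 0 < δ) :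
    ∫ τ in a..b, (τ - a) * exp (-(τ / δ)) ≤
      min (b - a) δ * δ * (exp (-(a / δ)) - exp (-(b / δ))) := by
  have hE : 0 ≤ exp (-(a / δ)) - exp (-(b / δ)) := by
    simp only [sub_nonneg, exp_le_exp, neg_le_neg_iff]; gcongr
  rw [min_mul_of_nonneg _ _ hδ.le, min_mul_of_nonneg _ _ hE]
  apply le_min
  · calc ∫ τ in a..b, (τ - a) * exp (-(τ / δ))
          ≤ ∫ τ in a..b, (b - a) * exp (-(τ / δ)) := by
          apply intervalIntegral.integral_mono_on hab
          · apply Continuous.intervalIntegrable; fun_prop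
          · apply Continuous.intervalIntegrable; fun_prop
          · intro τ hτ; gcongr; exact hτ.2
      _ = _ := by
          rw [intervalIntegral.integral_const_mul, integral_exp_neg_div a b δ hδ.ne']; ring
  · have hF : ∀ τ ∈ uIcc a b, HasDerivAt (fun τ => -δ * (τ - a + δ) * exp (-(τ / δ)))
        ((τ - a) * exp (-(τ / δ))) τ := fun τ _ =>
      (((((hasDerivAt_id' τ).sub_const a).add_const δ).const_mul (-δ)).mul
        (hasDerivAt_exp_neg_div δ τ)).congr_deriv (by field_simp; ring)
    rw [intervalIntegral.integral_eq_sub_of_hasDerivAt hF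
      (by apply Continuous.intervalIntegrable; fun_prop)]
    -- the integral is `δ² (e^{-a/δ} - e^{-b/δ}) - δ (b - a) e^{-b/δ}`
    have : 0 ≤ δ * (b - a) * exp (-(b / δ)) := by have := exp_pos (-(b / δ)); positivity
    nlinarith

theorem abs_integral_nodal_mul_le {f F : ℝ → ℝ} {a b : ℝ} (hab : a ≤ b)
    (hf : ContinuousOn f (Icc a b)) (hF : ContinuousOn F (Icc a b))
    (hfF : ∀ τ ∈ Icc a b, |f τ| ≤ F τ) :
    |∫ τ in a..b, (τ - b) * (τ - a) * f τ| ≤ (b - a) * ∫ τ in a..b, (τ - a) * F τ := by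
  rw [← intervalIntegral.integral_const_mul]
  refine (intervalIntegral.abs_integral_le_integral_abs hab).trans
    (intervalIntegral.integral_mono_on hab ?_ ?_ fun τ hτ => ?_)
  · exact (ContinuousOn.intervalIntegrable (by rw [uIcc_of_le hab]; fun_prop)).abs
  · exact ContinuousOn.intervalIntegrable (by rw [uIcc_of_le hab]; fun_prop)
  · rw [abs_mul, abs_mul, abs_of_nonpos (by linarith [hτ.2] : τ - b ≤ 0),
      abs_of_nonneg (by linarith [hτ.1] : 0 ≤ τ - a), ← mul_assoc]
    have hτa : 0 ≤ τ - a := by linarith [hτ.1]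
    gcongr
    · linarith [hτ.2]
    · exact hfF τ hτ

theorem abs_integral_nodal_mul_le_of_layer_bound {f : ℝ → ℝ} {a b δ M K : ℝ} (hab : a ≤ b)
    (hδ : 0 < δ) (hK : 0 ≤ K) (hf : ContinuousOn f (Icc a b))
    (hfb : ∀ τ ∈ Icc a b, |f τ| ≤ M + K * exp (-(τ / δ))) :
    |∫ τ in a..b, (τ - b) * (τ - a) * f τ| ≤
      (b - a) * (M / 2 * (b - a) ^ 2 +
        K * min (b - a) δ * δ * (exp (-(a / δ)) - exp (-(b / δ)))) := by
  refine (abs_integral_nodal_mul_le hab hf (by fun_prop) hfb).trans ?_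
  have hsplit : ∫ τ in a..b, (τ - a) * (M + K * exp (-(τ / δ))) =
      M * (∫ τ in a..b, (τ - a)) + K * ∫ τ in a..b, (τ - a) * exp (-(τ / δ)) := by
    simp only [mul_add, mul_left_comm _ K, mul_comm _ M]
    rw [intervalIntegral.integral_add (by apply Continuous.intervalIntegrable; fun_prop)
      (by apply Continuous.intervalIntegrable; fun_prop),
      intervalIntegral.integral_const_mul, intervalIntegral.integral_const_mul]
  have hlin : ∫ τ in a..b, (τ - a) = (b - a) ^ 2 / 2 := by
    rw [intervalIntegral.integral_comp_sub_right (fun τ => τ), integral_id]; ring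
  rw [hsplit, hlin]
  refine mul_le_mul_of_nonneg_left ?_ (sub_nonneg.2 hab)
  linarith [mul_le_mul_of_nonneg_left (integral_sub_mul_exp_neg_div_le hab hδ) hK]

-- Twice the trapezoidal-rule error of `∫_{x k}^{x (k+1)} g` when `f = g''`.
noncomputable def trapezoidRemainder (x : ℕ → ℝ) (f : ℝ → ℝ) (k : ℕ) : ℝ :=
  ∫ τ in x k..x (k + 1), (τ - x (k + 1)) * (τ - x k) * f τ

theorem sum_abs_trapezoidRemainder_le_of_uniform {f : ℝ → ℝ} {x : ℕ → ℝ} {a h δ M K : ℝ}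
    {n : ℕ} (hx : ∀ k ≤ n, x k = a + k * h) (hh : 0 ≤ h) (hδ : 0 < δ) (hK : 0 ≤ K)
    (hf : ContinuousOn f (Icc a (a + n * h)))
    (hfb : ∀ τ ∈ Icc a (a + n * h), |f τ| ≤ M + K * exp (-(τ / δ))) :
    ∑ k ∈ range n, |trapezoidRemainder x f k| ≤
      M / 2 * (n * h) * h ^ 2 + K * δ * h * min h δ * exp (-(a / δ)) := by
  have hcell : ∀ k ∈ range n, |trapezoidRemainder x f k| ≤
      h * (M / 2 * h ^ 2 +
        K * min h δ * δ * (exp (-(x k / δ)) - exp (-(x (k + 1) / δ)))) := by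
    intro k hk
    have hk : k + 1 ≤ n := mem_range.1 hk
    have hstep : x (k + 1) - x k = h := by
      rw [hx k (by omega), hx (k + 1) hk]; push_cast; ring
    have hsub : Icc (x k) (x (k + 1)) ⊆ Icc a (a + n * h) := by
      have hkn : ((k + 1 : ℕ) : ℝ) ≤ n := by exact_mod_cast hk
      apply Set.Icc_subset_Icc <;> rw [hx _ (by omega)]
      · have : (0 : ℝ) ≤ k * h := by positivity
        linarith
      · gcongr
    have := abs_integral_nodal_mul_le_of_layer_bound (by linarith) hδ hK (hf.mono hsub)
      fun τ hτ => hfb τ (hsub hτ)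
    rwa [hstep] at this
  have htel := sum_range_sub' (fun k => exp (-(x k / δ))) n
  calc _ ≤ _ := sum_le_sum hcell
    _ = M / 2 * (n * h) * h ^ 2 +
        K * δ * h * min h δ * (exp (-(x 0 / δ)) - exp (-(x n / δ))) := by
      simp only [mul_add, sum_add_distrib, sum_const, card_range, nsmul_eq_mul, ← mul_sum, htel]
      ring
    _ ≤ _ := by
      rw [hx 0 (Nat.zero_le n), Nat.cast_zero, zero_mul, add_zero]
      have := exp_pos (-(x n / δ))
      gcongr
      linarith

theorem one_le_log_of_three_le {x : ℝ} (hx : 3 ≤ x) : 1 ≤ Real.log x := by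
  rw [Real.le_log_iff_exp_le (by linarith)]
  linarith [Real.exp_one_lt_d9]

theorem sum_Icc_one_sub_one {M : Type*} [AddCommMonoid M] (F : ℕ → ℕ → M) (n : ℕ) :
    ∑ j ∈ Icc 1 n, F (j - 1) j = ∑ k ∈ range n, F k (k + 1) := by
  induction n with
  | zero => simp
  | succ n ih => rw [sum_Icc_succ_top (by omega), ih, sum_range_succ, Nat.add_sub_cancel]

section ShishkinMesh

variable {T abar ε : ℝ} {N m : ℕ}

theorem sRho_nonneg (hT : 0 ≤ T) (habar : 0 ≤ abar) (hε : 0 ≤ ε) : 0 ≤ sRho T abar ε N :=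
  le_min (by linarith) (by have := Real.log_natCast_nonneg N; positivity)

theorem sRho_le_half : sRho T abar ε N ≤ T / 2 := min_le_left _ _

theorem sH1_nonneg (hρ : 0 ≤ sRho T abar ε N) : 0 ≤ sH1 T abar ε N := by
  unfold sH1; positivity

theorem sH1_le_sH2 : sH1 T abar ε N ≤ sH2 T abar ε N := by
  unfold sH1 sH2
  have := sRho_le_half (T := T) (abar := abar) (ε := ε) (N := N)
  gcongr
  linarith

theorem sH2_nonneg (hT : 0 ≤ T) : 0 ≤ sH2 T abar ε N := by
  have := sRho_le_half (T := T) (abar := abar) (ε := ε) (N := N)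
  unfold sH2; apply div_nonneg <;> linarith [N.cast_nonneg (α := ℝ)]

theorem sH2_le (hρ : 0 ≤ sRho T abar ε N) : sH2 T abar ε N ≤ 2 * T / N := by
  unfold sH2; gcongr; linarith

theorem sH1_le_log : sH1 T abar ε N ≤ 2 * (abar⁻¹ * ε) * Real.log N / N := by
  unfold sH1 sRho
  rw [mul_assoc 2]
  gcongr
  exact min_le_right _ _

theorem min_sH2_mul_exp_neg_sRho_le (hT : 0 ≤ T) (habar : 0 < abar) (hε : 0 < ε)
    (hN : 1 ≤ Real.log N) :
    min (sH2 T abar ε N) (abar⁻¹ * ε) * exp (-(sRho T abar ε N / (abar⁻¹ * ε))) ≤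
      2 * (abar⁻¹ * ε) * Real.log N / N := by
  set δ := abar⁻¹ * ε
  have hδ : 0 < δ := by positivity
  have hNpos : (0 : ℝ) < N :=
    Nat.cast_pos.2 (Nat.pos_of_ne_zero fun h => by norm_num [h] at hN)
  rcases le_total (δ * Real.log N) (T / 2) with hlayer | hlayer
  · have hρ : sRho T abar ε N = δ * Real.log N := min_eq_right hlayer
    rw [hρ, mul_div_cancel_left₀ _ hδ.ne', exp_neg, exp_log hNpos, ← div_eq_mul_inv]
    gcongr
    calc min (sH2 T abar ε N) δ ≤ δ := min_le_right _ _
      _ ≤ 2 * δ * Real.log N := by nlinarith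
  · have hρ : sRho T abar ε N = T / 2 := min_eq_left hlayer
    have hexp : exp (-(T / 2 / δ)) ≤ 1 := by
      rw [exp_le_one_iff, neg_nonpos]; positivity
    have hH2 : sH2 T abar ε N = T / N := by unfold sH2; rw [hρ]; ring
    rw [hρ, hH2]
    calc min (T / N) δ * exp (-(T / 2 / δ)) ≤ T / N * 1 := by
          gcongr
          exact min_le_left _ _
      _ ≤ 2 * δ * Real.log N / N := by rw [mul_one]; gcongr; linarith

theorem sXi_add_self_of_le {k : ℕ} (hk : k ≤ m) :
    sXi T abar ε (m + m) k = k * sH1 T abar ε (m + m) :=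
  if_pos (by omega)

theorem natCast_mul_sH1_add_self (hm : m ≠ 0) :
    (m : ℝ) * sH1 T abar ε (m + m) = sRho T abar ε (m + m) := by
  unfold sH1; push_cast; field_simp; ring

theorem natCast_mul_sH2_add_self (hm : m ≠ 0) :
    (m : ℝ) * sH2 T abar ε (m + m) = T - sRho T abar ε (m + m) := by
  unfold sH2; push_cast; field_simp; ring

theorem sXi_add_self_add (hm : m ≠ 0) (k : ℕ) :
    sXi T abar ε (m + m) (m + k) = sRho T abar ε (m + m) + k * sH2 T abar ε (m + m) := by
  rcases Nat.eq_zero_or_pos k with rfl | hk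
  · rw [add_zero, sXi_add_self_of_le le_rfl, natCast_mul_sH1_add_self hm]; simp
  · rw [sXi, if_neg (by omega)]; push_cast; ring

variable {f : ℝ → ℝ} {M K : ℝ}

theorem sum_abs_trapezoidRemainder_fine_le (hm : m ≠ 0) (hT : 0 ≤ T) (habar : 0 < abar)
    (hε : 0 < ε) (hM : 0 ≤ M) (hK : 0 ≤ K) (hf : ContinuousOn f (Icc 0 T))
    (hfb : ∀ τ ∈ Icc 0 T, |f τ| ≤ M + K * exp (-(τ / (abar⁻¹ * ε)))) :
    ∑ k ∈ range m, |trapezoidRemainder (sXi T abar ε (m + m)) f k| ≤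
      M / 2 * sRho T abar ε (m + m) * (2 * T / (m + m : ℕ)) ^ 2 +
        K * (abar⁻¹ * ε) * (2 * T / (m + m : ℕ)) *
          (2 * (abar⁻¹ * ε) * Real.log (m + m : ℕ) / (m + m : ℕ)) := by
  have hρ := sRho_nonneg (N := m + m) hT habar.le hε.le
  have hρT : sRho T abar ε (m + m) ≤ T := sRho_le_half.trans (by linarith)
  have hsub : Icc 0 (0 + m * sH1 T abar ε (m + m)) ⊆ Icc 0 T := by
    rw [zero_add, natCast_mul_sH1_add_self hm]; exact Icc_subset_Icc le_rfl hρT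
  refine (sum_abs_trapezoidRemainder_le_of_uniform
    (fun k hk => (sXi_add_self_of_le hk).trans (zero_add _).symm) (sH1_nonneg hρ)
    (by positivity) hK (hf.mono hsub) fun τ hτ => hfb τ (hsub hτ)).trans ?_
  rw [natCast_mul_sH1_add_self hm, zero_div, neg_zero, exp_zero, mul_one]
  have hh := sH1_nonneg hρ
  gcongr
  · exact sH1_le_sH2.trans (sH2_le hρ)
  · exact sH1_le_sH2.trans (sH2_le hρ)
  · exact (min_le_left _ _).trans sH1_le_log

theorem sum_abs_trapezoidRemainder_coarse_le (hm : m ≠ 0) (hT : 0 ≤ T) (habar : 0 < abar)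
    (hε : 0 < ε) (hL : 1 ≤ Real.log (m + m : ℕ)) (hM : 0 ≤ M) (hK : 0 ≤ K)
    (hf : ContinuousOn f (Icc 0 T))
    (hfb : ∀ τ ∈ Icc 0 T, |f τ| ≤ M + K * exp (-(τ / (abar⁻¹ * ε)))) :
    ∑ k ∈ range m, |trapezoidRemainder (sXi T abar ε (m + m)) f (m + k)| ≤
      M / 2 * (T - sRho T abar ε (m + m)) * (2 * T / (m + m : ℕ)) ^ 2 +
        K * (abar⁻¹ * ε) * (2 * T / (m + m : ℕ)) *
          (2 * (abar⁻¹ * ε) * Real.log (m + m : ℕ) / (m + m : ℕ)) := by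
  have hρ := sRho_nonneg (N := m + m) hT habar.le hε.le
  have hsub : Icc (sRho T abar ε (m + m)) (sRho T abar ε (m + m) + m * sH2 T abar ε (m + m)) ⊆
      Icc 0 T := by
    rw [natCast_mul_sH2_add_self hm, add_sub_cancel]; exact Icc_subset_Icc hρ le_rfl
  refine (sum_abs_trapezoidRemainder_le_of_uniform (x := fun k => sXi T abar ε (m + m) (m + k))
    (fun k _ => sXi_add_self_add hm k) (sH2_nonneg hT) (by positivity) hK (hf.mono hsub)
    fun τ hτ => hfb τ (hsub hτ)).trans ?_
  rw [natCast_mul_sH2_add_self hm, mul_assoc _ (min _ _)]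
  have hh := sH2_nonneg (abar := abar) (ε := ε) (N := m + m) hT
  have hρT : 0 ≤ T - sRho T abar ε (m + m) := by
    linarith [sRho_le_half (T := T) (abar := abar) (ε := ε) (N := m + m)]
  gcongr
  · exact sH2_le hρ
  · exact sH2_le hρ
  · exact min_sH2_mul_exp_neg_sRho_le hT habar hε hL

theorem sum_abs_trapezoidRemainder_shishkin_le (hm : m ≠ 0) (hT : 0 ≤ T) (habar : 0 < abar)
    (hε : 0 < ε) (hL : 1 ≤ Real.log (m + m : ℕ)) (hM : 0 ≤ M) (hK : 0 ≤ K)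
    (hf : ContinuousOn f (Icc 0 T))
    (hfb : ∀ τ ∈ Icc 0 T, |f τ| ≤ M + K * exp (-(τ / (abar⁻¹ * ε)))) :
    ∑ k ∈ range (m + m), |trapezoidRemainder (sXi T abar ε (m + m)) f k| ≤
      2 * (M * T ^ 3 + 4 * (K * (abar⁻¹ * ε) ^ 2) * T * Real.log (m + m : ℕ)) /
        ((m + m : ℕ) : ℝ) ^ 2 := by
  rw [sum_range_add]
  refine (add_le_add (sum_abs_trapezoidRemainder_fine_le hm hT habar hε hM hK hf hfb)
    (sum_abs_trapezoidRemainder_coarse_le hm hT habar hε hL hM hK hf hfb)).trans_eq ?_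
  have hN : ((m + m : ℕ) : ℝ) ≠ 0 := by positivity
  field_simp
  ring

end ShishkinMesh

/-- trapezoidal remainder bound
`|½ Σ_{j=1}^{N} ∫_{ξ_{j−1}}^{ξ_j} (τ−ξ_j)(τ−ξ_{j−1}) g'' dτ| ≤ C N⁻² ln N`
on the Shishkin mesh, for `g ∈ C²([0,T])` with `|g''(τ)| ≤ M(1 + ε⁻² e^{−ā τ/ε})`. -/
theorem trapezoid_remainder_layer_bound
    (M abar T : ℝ) (hM : 0 < M) (habar : 0 < abar) (hT : 0 < T) :
    ∃ C : ℝ, 0 < C ∧ ∀ (ε : ℝ) (N : ℕ), 0 < ε → ε ≤ 1 → 4 ≤ N → Even N →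
      ∀ g g' g'' : ℝ → ℝ,
        (∀ τ ∈ Set.Icc 0 T, HasDerivWithinAt g (g' τ) (Set.Icc 0 T) τ) →
        (∀ τ ∈ Set.Icc 0 T, HasDerivWithinAt g' (g'' τ) (Set.Icc 0 T) τ) →
        ContinuousOn g'' (Set.Icc 0 T) →
        (∀ τ ∈ Set.Icc 0 T,
          |g'' τ| ≤ M * (1 + (ε ^ 2)⁻¹ * Real.exp (-(abar * τ) / ε))) →
        |(1 / 2) * ∑ j ∈ Finset.Icc 1 N,
            ∫ τ in sXi T abar ε N (j - 1)..sXi T abar ε N j,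
              (τ - sXi T abar ε N j) * (τ - sXi T abar ε N (j - 1)) * g'' τ|
          ≤ C * ((N : ℝ) ^ 2)⁻¹ * Real.log N := by
  refine ⟨M * (T ^ 3 + 4 * T / abar ^ 2), by positivity, ?_⟩
  rintro ε N hε - hN ⟨m, rfl⟩ g - g'' - - hg''c hbound
  set ξ := sXi T abar ε (m + m)
  set L := Real.log (m + m : ℕ)
  have hL : 1 ≤ L := one_le_log_of_three_le (by exact_mod_cast (by omega : 3 ≤ m + m))
  have hsum := sum_abs_trapezoidRemainder_shishkin_le (K := M * (ε ^ 2)⁻¹) (by omega) hT.le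
    habar hε hL hM.le (by positivity) hg''c fun τ hτ => (hbound τ hτ).trans_eq (by field_simp)
  have hKδ : M * (ε ^ 2)⁻¹ * (abar⁻¹ * ε) ^ 2 = M / abar ^ 2 := by field_simp
  rw [hKδ] at hsum
  calc _ = 1 / 2 * |∑ k ∈ range (m + m), trapezoidRemainder ξ g'' k| := by
        rw [sum_Icc_one_sub_one (fun k j => ∫ τ in ξ k..ξ j, (τ - ξ j) * (τ - ξ k) * g'' τ),
          abs_mul, abs_of_pos (by norm_num : (0 : ℝ) < 1 / 2)]
        rfl
    _ ≤ 1 / 2 * (2 * (M * T ^ 3 + 4 * (M / abar ^ 2) * T * L) / ((m + m : ℕ) : ℝ) ^ 2) := by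
        gcongr
        exact (abs_sum_le_sum_abs _ _).trans hsum
    _ = (M * T ^ 3 + 4 * (M / abar ^ 2) * T * L) * (((m + m : ℕ) : ℝ) ^ 2)⁻¹ := by ring
    _ ≤ (M * T ^ 3 * L + 4 * (M / abar ^ 2) * T * L) * (((m + m : ℕ) : ℝ) ^ 2)⁻¹ := by
        gcongr ?_ * _
        linarith [mul_le_mul_of_nonneg_left hL (by positivity : 0 ≤ M * T ^ 3)]
    _ = _ := by ring
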